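/- arXiv:2509.11953 — 3 statements merged into one kernel-verified Lean document; each statement's English description precedes it below -/
import Mathlib

section
/- Let (M, Ω, θ, H) be a Hamiltonian system on an LCS manifold. If f is a dissipated quantity (X_H(f) = f θ(X_H)) and H is nowhere zero, then f/H is a conserved quantity: X_H(f/H) = 0. -/
/-!
Abstract setting: `F` = smooth functions on the LCS manifold `(M, Ω, θ)`,
`XH : F → F` the derivation given by the Hamiltonian vector field `X_H`
of `H`, and `tXH = θ(X_H) ∈ F`.  Since `X_H ⨼ Ω = dH − Hθ` and
`Ω(X_H, X_H) = 0`, one has `X_H H = H θ(X_H)` (included as a hypothesis).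
`H` nowhere zero means `H` is invertible in `C^∞(M)`, with inverse
`Hinv`, and `f/H = f · Hinv`.

STATEMENT: if `f` is dissipated (`X_H f = f θ(X_H)`) and `H` is nowhere
zero, then `f/H` is a conserved quantity: `X_H (f/H) = 0`.
-/
theorem dissipated_div_hamiltonian_conserved
    (F : Type*) [CommRing F] [Algebra ℝ F]
    (XH : F → F) (tXH : F) (H : F)
    -- X_H acts as a derivation
    (hderiv : ∀ f g : F, XH (f * g) = f * XH g + g * XH f)
    -- X_H(H) = H θ(X_H)
    (hH : XH H = H * tXH)
    -- H is nowhere zero: it has a multiplicative inverse Hinv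
    (Hinv : F) (hHinv : H * Hinv = 1)
    (f : F)
    (hf : XH f = f * tXH) :
    XH (f * Hinv) = 0 := by
  have h1 : XH (1 : F) = 0 := by
    have h := hderiv 1 1
    rw [mul_one] at h
    linear_combination -h
  have h2 : XH (H * Hinv) = 0 := by rw [hHinv, h1]
  have h3 : H * XH Hinv + Hinv * XH H = 0 := by rw [← hderiv, h2]
  have h4 : XH Hinv = -(Hinv * tXH) := by
    have := congrArg (Hinv * ·) h3
    simp only [mul_add, mul_zero] at this
    calc XH Hinv = Hinv * (H * XH Hinv) + Hinv * (Hinv * XH H) - Hinv * (Hinv * XH H) := by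
          rw [← mul_assoc, mul_comm Hinv H, hHinv, one_mul]; ring
      _ = -(Hinv * tXH) := by
          rw [this, hH, zero_sub, ← mul_assoc, ← mul_assoc, mul_assoc Hinv Hinv H,
            mul_comm Hinv H, hHinv, mul_one]
  rw [hderiv, hf, h4]; ring
end

section
/- Let (M, Ω, θ, H) be a Hamiltonian system on an LCS manifold. If f₁ and f₂ are dissipated quantities (X_H(fᵢ) = fᵢ θ(X_H)) and f₂ is nowhere zero, then f₁/f₂ is a conserved quantity: X_H(f₁/f₂) = 0. -/
theorem quotient_of_dissipated_quantities_conserved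
    (F : Type*) [CommRing F] [Algebra ℝ F]
    (XH : F → F) (tXH : F)
    -- X_H acts as a derivation
    (hderiv : ∀ f g : F, XH (f * g) = f * XH g + g * XH f)
    (f₁ f₂ : F)
    (hf₁ : XH f₁ = f₁ * tXH)
    (hf₂ : XH f₂ = f₂ * tXH)
    -- f₂ is nowhere zero: it has a multiplicative inverse f₂inv
    (f₂inv : F) (hf₂inv : f₂ * f₂inv = 1) :
    XH (f₁ * f₂inv) = 0 := by
  have h1 : XH 1 = 0 := by
    have h := hderiv 1 1
    simp only [mul_one, one_mul] at h
    linear_combination -h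
  have hinv : XH f₂inv = -f₂inv * tXH := by
    have h := hderiv f₂ f₂inv
    rw [hf₂inv, h1, hf₂] at h
    have h2 : f₂ * XH f₂inv = -tXH := by
      have : f₂inv * (f₂ * tXH) = tXH := by
        rw [← mul_assoc, mul_comm f₂inv f₂, hf₂inv, one_mul]
      linear_combination -h - this
    have := congrArg (f₂inv * ·) h2
    calc XH f₂inv = f₂inv * f₂ * XH f₂inv := by
          rw [mul_comm f₂inv f₂, hf₂inv, one_mul]
      _ = f₂inv * -tXH := by rw [mul_assoc, this]
      _ = -f₂inv * tXH := by ring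
  rw [hderiv, hinv, hf₁]; ring
end

section
/- On M = ℝ⁴ ∖ {q₁ = q₂ = 0} restricted to p₁ > 0, with Ω = (1/p₁)(dq₁∧dp₁ + dq₂∧dp₂) and θ = −(1/p₁) dp₁, and Hamiltonian H = ½(p₁² + p₂²) − 1/q₁ − 1/q₂, the vector field X = q₁ ∂_{q₁} + q₂ ∂_{q₂} − (p₁/2) ∂_{p₁} − (p₂/2) ∂_{p₂} satisfies L_X Ω = Ω, L_X θ = 0, and L_X H = −H; i.e., X is a scaling symmetry of degree −1. -/
/-!
Concrete example on `M = ℝ⁴ ∖ {q₁ = 0, q₂ = 0}` restricted to `p₁ > 0`,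
with coordinates `(q₁, q₂, p₁, p₂) = (x 0, x 1, x 2, x 3)`, LCS
structure `Ω = (1/p₁)(dq₁∧dp₁ + dq₂∧dp₂)`, `θ = −(1/p₁) dp₁` (forms
represented by their pointwise multilinear actions), and Hamiltonian
`H = ½(p₁² + p₂²) − 1/q₁ − 1/q₂`.

The vector field `X = q₁ ∂_{q₁} + q₂ ∂_{q₂} − (p₁/2) ∂_{p₁} − (p₂/2) ∂_{p₂}`
is linear, `X x = S x` with `S u = (u 0, u 1, −u 2/2, −u 3/2)`, so the
Lie derivative of a form `T` along `X` at `x`, evaluated on constant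
vectors, is
`(L_X T) x (u, …) = fderiv (T · (u,…)) x (X x) + Σ T x (… S u …)`.

STATEMENT: `L_X Ω = Ω`, `L_X θ = 0` and `L_X H = −H`; i.e. `X` is a
scaling symmetry of degree `−1` for `(M, Ω, θ, H)`.
-/

noncomputable section

/-- `Ω = (1/p₁)(dq₁∧dp₁ + dq₂∧dp₂)`. -/
def Ω₁₉ (x u v : Fin 4 → ℝ) : ℝ :=
  (1 / x 2) * ((u 0 * v 2 - u 2 * v 0) + (u 1 * v 3 - u 3 * v 1))

/-- `θ = −(1/p₁) dp₁`. -/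
def θ₁₉ (x u : Fin 4 → ℝ) : ℝ := -(1 / x 2) * u 2

/-- `H = ½(p₁² + p₂²) − 1/q₁ − 1/q₂`. -/
def H₁₉ (x : Fin 4 → ℝ) : ℝ :=
  (x 2 ^ 2 + x 3 ^ 2) / 2 - 1 / x 0 - 1 / x 1

/-- The (linear) scaling vector field
`X = q₁ ∂_{q₁} + q₂ ∂_{q₂} − (p₁/2) ∂_{p₁} − (p₂/2) ∂_{p₂}`. -/
def S₁₉ (u : Fin 4 → ℝ) : Fin 4 → ℝ := ![u 0, u 1, -(u 2) / 2, -(u 3) / 2]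

/-
`X` generates the flow `(q, p) ↦ (eᵗ q, e^{-t/2} p)`, and the Lie derivative of a tensor of
weight `w` under this flow is `w` times the tensor. The factor `1/p₁` and each `dqᵢ ∧ dpᵢ` have
weight `1/2`, `dp₁` has weight `-1/2`, and both `p²` and `1/q` have weight `-1`.
-/

lemma hasFDerivAt_apply_inv {ι : Type*} [Fintype ι] {x : ι → ℝ} {i : ι} (hx : x i ≠ 0) :
    HasFDerivAt (fun y : ι → ℝ => (y i)⁻¹)
      ((-(x i ^ 2)⁻¹) • ContinuousLinearMap.proj (R := ℝ) (φ := fun _ : ι => ℝ) i) x :=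
  (hasDerivAt_inv hx).comp_hasFDerivAt x (hasFDerivAt_apply i x)

section ScalingField

variable {x : Fin 4 → ℝ}

lemma fderiv_inv_apply_two_mul_const_S₁₉ (hx : x 2 ≠ 0) (c : ℝ) :
    fderiv ℝ (fun y : Fin 4 → ℝ => (y 2)⁻¹ * c) x (S₁₉ x) = (x 2)⁻¹ * c / 2 := by
  rw [((hasFDerivAt_apply_inv hx).mul_const c).fderiv]
  simp only [S₁₉, smul_apply, ContinuousLinearMap.proj_apply, Matrix.cons_val, smul_eq_mul]
  field_simp

lemma fderiv_Ω₁₉_S₁₉ (hx : x 2 ≠ 0) (u v : Fin 4 → ℝ) :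
    fderiv ℝ (fun y => Ω₁₉ y u v) x (S₁₉ x) = Ω₁₉ x u v / 2 := by
  simpa only [Ω₁₉, one_div, mul_comm] using fderiv_inv_apply_two_mul_const_S₁₉ hx
    ((u 0 * v 2 - u 2 * v 0) + (u 1 * v 3 - u 3 * v 1))

lemma Ω₁₉_S₁₉_add_Ω₁₉_S₁₉ (x u v : Fin 4 → ℝ) :
    Ω₁₉ x (S₁₉ u) v + Ω₁₉ x u (S₁₉ v) = Ω₁₉ x u v / 2 := by
  simp only [Ω₁₉, S₁₉, Matrix.cons_val]
  ring

lemma fderiv_θ₁₉_S₁₉ (hx : x 2 ≠ 0) (u : Fin 4 → ℝ) :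
    fderiv ℝ (fun y => θ₁₉ y u) x (S₁₉ x) = θ₁₉ x u / 2 := by
  simpa only [θ₁₉, one_div, neg_mul, mul_neg] using fderiv_inv_apply_two_mul_const_S₁₉ hx (-u 2)

lemma θ₁₉_S₁₉ (x u : Fin 4 → ℝ) : θ₁₉ x (S₁₉ u) = -(θ₁₉ x u / 2) := by
  simp only [θ₁₉, S₁₉, Matrix.cons_val]
  ring

lemma fderiv_H₁₉_S₁₉ (hq₁ : x 0 ≠ 0) (hq₂ : x 1 ≠ 0) : fderiv ℝ H₁₉ x (S₁₉ x) = -H₁₉ x := by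
  have hH : HasFDerivAt H₁₉ _ x :=
    ((((hasFDerivAt_apply 2 x).pow 2).add ((hasFDerivAt_apply 3 x).pow 2)).mul_const 2⁻¹).sub
      (hasFDerivAt_apply_inv hq₁) |>.sub (hasFDerivAt_apply_inv hq₂)
      |>.congr_of_eventuallyEq (.of_forall fun y => by simp only [H₁₉, Pi.sub_apply, Pi.add_apply]; ring)
  rw [hH.fderiv]
  simp only [H₁₉, S₁₉, sub_apply, add_apply,
    smul_apply, ContinuousLinearMap.proj_apply, Matrix.cons_val, smul_eq_mul,
    nsmul_eq_mul]
  field_simp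
  ring

end ScalingField

theorem scaling_symmetry_degree_neg_one
    (x : Fin 4 → ℝ) (hp : x 2 > 0) (hq₁ : x 0 ≠ 0) (hq₂ : x 1 ≠ 0) :
    -- L_X Ω = Ω
    (∀ u v : Fin 4 → ℝ,
      fderiv ℝ (fun y => Ω₁₉ y u v) x (S₁₉ x)
        + Ω₁₉ x (S₁₉ u) v + Ω₁₉ x u (S₁₉ v) = Ω₁₉ x u v) ∧
    -- L_X θ = 0
    (∀ u : Fin 4 → ℝ,
      fderiv ℝ (fun y => θ₁₉ y u) x (S₁₉ x) + θ₁₉ x (S₁₉ u) = 0) ∧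
    -- L_X H = −H
    fderiv ℝ H₁₉ x (S₁₉ x) = - H₁₉ x := by
  have hp₁ : x 2 ≠ 0 := hp.ne'
  refine ⟨fun u v => ?_, fun u => ?_, fderiv_H₁₉_S₁₉ hq₁ hq₂⟩
  · rw [add_assoc, fderiv_Ω₁₉_S₁₉ hp₁, Ω₁₉_S₁₉_add_Ω₁₉_S₁₉]
    ring
  · rw [fderiv_θ₁₉_S₁₉ hp₁, θ₁₉_S₁₉]
    ring

end
end
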